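/- arXiv:1601.01711 — 6 statements merged into one kernel-verified Lean document; each statement's English description precedes it below -/
import Mathlib

section
/- Let s, k be positive integers with 1 ≤ s < p for a prime p, and let 0 ≤ R < p^k with R > 0 if s = 1. Then the multinomial coefficient (s·p^k + R)! / ((p^k!)^s · R!) is not divisible by p. -/
/-!
By Legendre's formula `v_p(n!) = ∑_{i ≥ 1} ⌊n / p^i⌋`. Since `s < p` and `R < p^k`, adding the
`s` copies of `p^k` and `R` in base `p` produces no carries, so `⌊(s p^k + R) / p^i⌋ =
s ⌊p^k / p^i⌋ + ⌊R / p^i⌋` for every `i`. Hence numerator and denominator have the same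
`p`-adic valuation, and the quotient has valuation `0`.
-/

open Nat

theorem factorial_pow_mul_factorial_dvd (a R : ℕ) :
    ∀ s : ℕ, a ! ^ s * R ! ∣ (s * a + R)!
  | 0 => by simp
  | s + 1 => by
    rw [show (s + 1) * a + R = a + (s * a + R) by ring, pow_succ', mul_assoc]
    exact (mul_dvd_mul_left _ (factorial_pow_mul_factorial_dvd a R s)).trans
      (factorial_mul_factorial_dvd_factorial_add _ _)

section NoCarry

variable {p s k R : ℕ}

theorem mul_pow_add_lt_pow_succ (hsp : s < p) (hR : R < p ^ k) : s * p ^ k + R < p ^ (k + 1) :=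
  calc s * p ^ k + R < (s + 1) * p ^ k := by linarith
    _ ≤ p * p ^ k := Nat.mul_le_mul_right _ hsp
    _ = p ^ (k + 1) := (pow_succ' p k).symm

theorem mul_pow_add_div_pow (hsp : s < p) (hR : R < p ^ k) (i : ℕ) :
    (s * p ^ k + R) / p ^ i = s * (p ^ k / p ^ i) + R / p ^ i := by
  have hp : 0 < p := by omega
  rcases le_or_gt i k with hik | hki
  · have hpk : p ^ k = p ^ (k - i) * p ^ i := by rw [← pow_add, Nat.sub_add_cancel hik]
    have hpi : 0 < p ^ i := pow_pos hp i
    rw [hpk, ← mul_assoc, add_comm, Nat.add_mul_div_right _ _ hpi, Nat.mul_div_cancel _ hpi,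
      add_comm]
  · have hzero : (s * p ^ k + R) / p ^ i = 0 :=
      Nat.div_eq_of_lt ((mul_pow_add_lt_pow_succ hsp hR).trans_le (Nat.pow_le_pow_right hp hki))
    have hmul : s * (p ^ k / p ^ i) ≤ (s * p ^ k + R) / p ^ i :=
      (Nat.mul_div_le_mul_div_assoc _ _ _).trans (Nat.div_le_div_right (le_add_right le_rfl))
    have hrem : R / p ^ i ≤ (s * p ^ k + R) / p ^ i := Nat.div_le_div_right (le_add_left le_rfl)
    rw [hzero, Nat.le_zero] at hmul hrem
    rw [hzero, hmul, hrem]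

theorem padicValNat_factorial_mul_pow_add [Fact p.Prime] (hsp : s < p) (hR : R < p ^ k) :
    padicValNat p (s * p ^ k + R)! = s * padicValNat p (p ^ k)! + padicValNat p R ! := by
  have legendre : ∀ n < p ^ (k + 1), padicValNat p n ! = ∑ i ∈ Finset.Ico 1 (k + 1), n / p ^ i :=
    fun n hn => padicValNat_factorial (log_lt_of_lt_pow' k.succ_ne_zero hn)
  have hpk : p ^ k < p ^ (k + 1) :=
    Nat.pow_lt_pow_right (Fact.out : p.Prime).one_lt k.lt_succ_self
  rw [legendre _ (mul_pow_add_lt_pow_succ hsp hR), legendre _ hpk, legendre _ (hR.trans hpk),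
    Finset.mul_sum, ← Finset.sum_add_distrib]
  exact Finset.sum_congr rfl fun i _ => mul_pow_add_div_pow hsp hR i

end NoCarry

theorem stmt_5_general (p s k R : ℕ) (hp : p.Prime)
    (hsp : s < p) (hR : R < p ^ k) :
    ¬ p ∣ (s * p ^ k + R).factorial / ((p ^ k).factorial ^ s * R.factorial) := by
  have : Fact p.Prime := ⟨hp⟩
  have hdvd := factorial_pow_mul_factorial_dvd (p ^ k) R s
  have hquot_ne_zero : (s * p ^ k + R)! / ((p ^ k)! ^ s * R !) ≠ 0 :=
    (Nat.div_pos (Nat.le_of_dvd (factorial_pos _) hdvd) (by positivity)).ne'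
  have hval : padicValNat p ((s * p ^ k + R)! / ((p ^ k)! ^ s * R !)) = 0 := by
    rw [padicValNat.div_of_dvd hdvd, padicValNat.mul (by positivity) (factorial_ne_zero R),
      padicValNat.pow, padicValNat_factorial_mul_pow_add hsp hR,
      Nat.sub_self]
  exact fun h => (dvd_iff_padicValNat_ne_zero hquot_ne_zero).1 h hval

/-- For a prime `p`, positive integers `s < p` and `k`, and `0 ≤ R < p^k`
(with `R > 0` if `s = 1`), the multinomial coefficient
`(s·p^k + R)! / ((p^k!)^s · R!)` is not divisible by `p`. -/
theorem stmt_5 (p s k R : ℕ) (hp : p.Prime) (hk : 0 < k) (hs : 1 ≤ s)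
    (hsp : s < p) (hR : R < p ^ k) (hR1 : s = 1 → 0 < R) :
    ¬ p ∣ (s * p ^ k + R).factorial / ((p ^ k).factorial ^ s * R.factorial) :=
  stmt_5_general p s k R hp hsp hR
end

section
/- Let λ be a composition of r, α ∈ S_r (viewed as 0-preserving maps of {0,...,r} or (r+1)×(r+1) 0-1 matrices), and suppose there exist π in the Young subgroup S_λ and σ ∈ S_r with α∘π = σ∘α. Then for every i with 1 ≤ i ≤ r and every λ-block b, the fibers satisfy #(α⁻¹(i) ∩ b) = #(α⁻¹(σ(i)) ∩ b). -/
/-- The label of the block of the composition `l` containing `k`: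
`0` for `k = 0`, the (1-based) index of the consecutive `l`-block containing
`k` for `1 ≤ k ≤ l.sum`, and `l.length + 1` for `k > l.sum`. -/
def blockOf (l : List ℕ) (k : ℕ) : ℕ :=
  if k = 0 then 0
  else ((Finset.range l.length).filter (fun i => (l.take (i + 1)).sum < k)).card + 1

/-- The Young subgroup of the composition `l`, as the set of permutations of `ℕ`
preserving every `l`-block (and fixing `0` and everything beyond `l.sum`). -/
def youngSet (l : List ℕ) : Set (Equiv.Perm ℕ) :=
  {σ | (∀ k, blockOf l (σ k) = blockOf l k) ∧ ∀ k, l.sum < k → σ k = k}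

/-- If `α` is a 0-preserving self-map of `{0,…,r}`, `π` lies in the Young
subgroup of the composition `l`, `σ ∈ 𝔖_r`, and `α ∘ π = σ ∘ α` on `{0,…,r}`,
then for every `1 ≤ i ≤ r` and every `l`-block (label `j`), the fibers satisfy
`#(α⁻¹(i) ∩ b) = #(α⁻¹(σ i) ∩ b)`. -/
theorem stmt_12 (r : ℕ) (l : List ℕ) (hsum : l.sum = r)
    (α : ℕ → ℕ) (hα0 : α 0 = 0) (hαr : ∀ x, x ≤ r → α x ≤ r)
    (π : Equiv.Perm ℕ) (hπ : π ∈ youngSet l)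
    (σ : Equiv.Perm ℕ) (hσ0 : σ 0 = 0) (hσr : ∀ x, x ≤ r → σ x ≤ r)
    (hcomm : ∀ x, x ≤ r → α (π x) = σ (α x)) :
    ∀ i, 1 ≤ i → i ≤ r → ∀ j,
      Set.ncard {x | 1 ≤ x ∧ x ≤ r ∧ α x = i ∧ blockOf l x = j} =
        Set.ncard {x | 1 ≤ x ∧ x ≤ r ∧ α x = σ i ∧ blockOf l x = j} := by
  obtain ⟨hblk, hfix⟩ := hπ
  -- π fixes 0
  have hπ0 : π 0 = 0 := by
    by_contra h
    have := hblk 0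
    simp [blockOf, h] at this
  -- π maps {1..r} into itself
  have hπr : ∀ x, x ≤ r → π x ≤ r := by
    intro x hx
    by_contra h
    push_neg at h
    have := hfix (π x) (by omega)
    have : π x = x := π.injective this
    omega
  have hπ1 : ∀ x, 1 ≤ x → 1 ≤ π x := by
    intro x hx
    by_contra h
    push_neg at h
    have : π x = π 0 := by omega
    have := π.injective this
    omega
  intro i hi1 hir j
  have himg : {x | 1 ≤ x ∧ x ≤ r ∧ α x = σ i ∧ blockOf l x = j} =
      π '' {x | 1 ≤ x ∧ x ≤ r ∧ α x = i ∧ blockOf l x = j} := by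
    ext y
    constructor
    · rintro ⟨hy1, hyr, hyα, hyb⟩
      refine ⟨π.symm y, ⟨?_, ?_, ?_, ?_⟩, by simp⟩
      · by_contra h
        push_neg at h
        have : π.symm y = 0 := by omega
        have : y = π 0 := by
          rw [← this]; simp
        omega
      · by_contra h
        push_neg at h
        have := hfix (π.symm y) (by omega)
        have h2 : π.symm y = y := by
          simpa using this.symm
        omega
      · have hx1 : π.symm y ≤ r := by
          by_contra h
          push_neg at h
          have := hfix (π.symm y) (by omega)
          have h2 : π.symm y = y := by
            simpa using this.symm
          omega
        have := hcomm (π.symm y) hx1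
        simp only [Equiv.apply_symm_apply] at this
        rw [hyα] at this
        exact σ.injective this.symm
      · have := hblk (π.symm y)
        simp only [Equiv.apply_symm_apply] at this
        omega
    · rintro ⟨x, ⟨hx1, hxr, hxα, hxb⟩, rfl⟩
      exact ⟨hπ1 x hx1, hπr x hxr, by rw [hcomm x hxr, hxα], by rw [hblk x, hxb]⟩
  rw [himg, Set.ncard_image_of_injective _ π.injective]
end

section
/- Let λ be a composition of r, α a map from {0,...,r} to itself fixing 0, and suppose for every π in the Young subgroup S_λ there exists σ ∈ S_r with απ = σα (i.e. certain fiber-count conditions hold). If b_k is a λ-block of size λ_k, i ∈ b_k, and α(i) lies in a λ-block b_j of size λ_j, and furthermore all rows of α indexed by b_j are λ-equivalent (meaning: for all l, l' ∈ b_j and every λ-block b, #(α⁻¹(l) ∩ b) = #(α⁻¹(l') ∩ b)), then λ_k ≥ λ_j; and if λ_k = λ_j, then α maps b_k bijectively onto b_j. -/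
lemma blockOf_eq_iff (l : List ℕ) (j : ℕ) (hj : j < l.length) (k : ℕ) :
    blockOf l k = j + 1 ↔ (l.take j).sum < k ∧ k ≤ (l.take (j + 1)).sum := by
  unfold blockOf
  have mono := List.monotone_sum_take l
  rcases Nat.eq_zero_or_pos k with rfl | hk
  · simp
  rw [if_neg hk.ne']
  constructor
  · intro h
    have hcard : ((Finset.range l.length).filter (fun i => (l.take (i + 1)).sum < k)).card = j :=
      Nat.succ_injective h
    constructor
    · by_contra hle
      push_neg at hle
      -- k ≤ (l.take j).sum, so j ≥ 1 and filter ⊆ range (j-1)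
      rcases Nat.eq_zero_or_pos j with rfl | hjpos
      · simp at hle; omega
      have hsub : ((Finset.range l.length).filter (fun i => (l.take (i + 1)).sum < k)) ⊆
          Finset.range (j - 1) := by
        intro x hx
        simp only [Finset.mem_filter, Finset.mem_range] at hx ⊢
        by_contra hxj
        push_neg at hxj
        have : (l.take j).sum ≤ (l.take (x + 1)).sum := mono (by omega)
        omega
      have := Finset.card_le_card hsub
      simp [hcard] at this
      omega
    · by_contra hle
      push_neg at hle
      have hsub : Finset.range (j + 1) ⊆
          ((Finset.range l.length).filter (fun i => (l.take (i + 1)).sum < k)) := by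
        intro x hx
        simp only [Finset.mem_range] at hx
        simp only [Finset.mem_filter, Finset.mem_range]
        refine ⟨by omega, ?_⟩
        have : (l.take (x + 1)).sum ≤ (l.take (j + 1)).sum := mono (by omega)
        omega
      have := Finset.card_le_card hsub
      simp [hcard] at this
  · rintro ⟨h1, h2⟩
    have : ((Finset.range l.length).filter (fun i => (l.take (i + 1)).sum < k)) =
        Finset.range j := by
      ext x
      simp only [Finset.mem_filter, Finset.mem_range]
      constructor
      · rintro ⟨hx, hxk⟩
        by_contra hxj
        push_neg at hxj
        have : (l.take (j + 1)).sum ≤ (l.take (x + 1)).sum := mono (by omega)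
        omega
      · intro hx
        refine ⟨by omega, ?_⟩
        have : (l.take (x + 1)).sum ≤ (l.take j).sum := mono (by omega)
        omega
    rw [this, Finset.card_range]

/-- Suppose `α` is a 0-preserving self-map of `{0,…,r}` such that for every
`π` in the Young subgroup of `l` there is `σ ∈ 𝔖_r` with `απ = σα`.  If
`i` lies in the `l`-block of index `jk` (of size `l[jk]`), `α i` lies in the
`l`-block of index `jj` (of size `l[jj]`), and all rows of `α` indexed by the
block `jj` are `λ`-equivalent (equal fiber counts in every block), then
`l[jj] ≤ l[jk]`, and if `l[jj] = l[jk]` then `α` maps the block `jk`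
bijectively onto the block `jj`. -/
theorem stmt_13 (r : ℕ) (l : List ℕ) (hsum : l.sum = r)
    (α : ℕ → ℕ) (hα0 : α 0 = 0) (hαr : ∀ x, x ≤ r → α x ≤ r)
    (hGL : ∀ π : Equiv.Perm ℕ, π ∈ youngSet l →
      ∃ σ : Equiv.Perm ℕ, σ 0 = 0 ∧ (∀ x, x ≤ r → σ x ≤ r) ∧
        ∀ x, x ≤ r → α (π x) = σ (α x))
    (jk jj : ℕ) (hjk : jk < l.length) (hjj : jj < l.length)
    (i : ℕ) (hib : blockOf l i = jk + 1) (hαib : blockOf l (α i) = jj + 1)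
    (hequiv : ∀ m m', blockOf l m = jj + 1 → blockOf l m' = jj + 1 →
      ∀ j, Set.ncard {x | 1 ≤ x ∧ x ≤ r ∧ α x = m ∧ blockOf l x = j} =
        Set.ncard {x | 1 ≤ x ∧ x ≤ r ∧ α x = m' ∧ blockOf l x = j}) :
    l.get ⟨jj, hjj⟩ ≤ l.get ⟨jk, hjk⟩ ∧
    (l.get ⟨jj, hjj⟩ = l.get ⟨jk, hjk⟩ →
      Set.BijOn α {x | blockOf l x = jk + 1} {x | blockOf l x = jj + 1}) := by
  classical
  set s : ℕ → ℕ := fun j => (l.take j).sum with hs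
  have mono : Monotone s := List.monotone_sum_take l
  have hsucck : s (jk + 1) = s jk + l.get ⟨jk, hjk⟩ := by
    simpa using List.sum_take_succ l jk hjk
  have hsuccj : s (jj + 1) = s jj + l.get ⟨jj, hjj⟩ := by
    simpa using List.sum_take_succ l jj hjj
  set Bk : Finset ℕ := Finset.Ioc (s jk) (s (jk + 1)) with hBkdef
  set Bj : Finset ℕ := Finset.Ioc (s jj) (s (jj + 1)) with hBjdef
  have hBk : ∀ x, blockOf l x = jk + 1 ↔ x ∈ Bk := by
    intro x; rw [blockOf_eq_iff l jk hjk x, hBkdef, Finset.mem_Ioc]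
  have hBj : ∀ x, blockOf l x = jj + 1 ↔ x ∈ Bj := by
    intro x; rw [blockOf_eq_iff l jj hjj x, hBjdef, Finset.mem_Ioc]
  have hcardBk : Bk.card = l.get ⟨jk, hjk⟩ := by
    rw [hBkdef, Nat.card_Ioc, hsucck]; omega
  have hcardBj : Bj.card = l.get ⟨jj, hjj⟩ := by
    rw [hBjdef, Nat.card_Ioc, hsuccj]; omega
  have hler : ∀ j, j ≤ l.length → s j ≤ r := by
    intro j hj
    have h1 := mono hj
    have h2 : s l.length = l.sum := by simp [hs]
    omega
  set f : ℕ → Finset ℕ := fun m => Bk.filter (fun x => α x = m) with hf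
  -- the sets in hequiv with j = jk+1 are the coercions of f m
  have hset : ∀ m, {x | 1 ≤ x ∧ x ≤ r ∧ α x = m ∧ blockOf l x = jk + 1} = ↑(f m) := by
    intro m
    ext x
    simp only [Set.mem_setOf_eq, hf, Finset.coe_filter, Set.mem_setOf_eq]
    constructor
    · rintro ⟨h1, h2, h3, h4⟩
      exact ⟨(hBk x).mp h4, h3⟩
    · rintro ⟨hx, h3⟩
      have hxIoc : s jk < x ∧ x ≤ s (jk + 1) := Finset.mem_Ioc.mp hx
      have hxr : x ≤ r := le_trans hxIoc.2 (hler (jk + 1) hjk)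
      exact ⟨by omega, hxr, h3, (hBk x).mpr hx⟩
  -- every fiber over Bj meets Bk
  have hiBk : i ∈ f (α i) := by
    rw [hf]
    exact Finset.mem_filter.mpr ⟨(hBk i).mp hib, rfl⟩
  have hfib : ∀ m ∈ Bj, 1 ≤ (f m).card := by
    intro m hm
    have h := hequiv (α i) m hαib ((hBj m).mpr hm) (jk + 1)
    rw [hset (α i), hset m, Set.ncard_coe_finset, Set.ncard_coe_finset] at h
    have : 0 < (f (α i)).card := Finset.card_pos.mpr ⟨i, hiBk⟩
    omega
  have hdisj : ∀ m ∈ Bj, ∀ m' ∈ Bj, m ≠ m' → Disjoint (f m) (f m') := by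
    intro m _ m' _ hne
    rw [Finset.disjoint_left]
    intro a ha ha'
    rw [hf, Finset.mem_filter] at ha ha'
    exact hne (ha.2 ▸ ha'.2)
  have hsub : Bj.biUnion f ⊆ Bk := by
    intro x hx
    rw [Finset.mem_biUnion] at hx
    obtain ⟨m, _, hxm⟩ := hx
    exact (Finset.mem_filter.mp hxm).1
  have hcardU : (Bj.biUnion f).card = ∑ m ∈ Bj, (f m).card :=
    Finset.card_biUnion hdisj
  have hineq : Bj.card ≤ Bk.card := by
    calc Bj.card = ∑ _m ∈ Bj, 1 := by simp
    _ ≤ ∑ m ∈ Bj, (f m).card := Finset.sum_le_sum hfib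
    _ = (Bj.biUnion f).card := hcardU.symm
    _ ≤ Bk.card := Finset.card_le_card hsub
  refine ⟨by omega, ?_⟩
  intro heq
  have hcardeq : Bj.card = Bk.card := by omega
  have hsumeq : ∑ m ∈ Bj, (f m).card = ∑ _m ∈ Bj, 1 := by
    have h1 : ∑ m ∈ Bj, (f m).card ≤ Bk.card := by
      rw [← hcardU]; exact Finset.card_le_card hsub
    have h2 : ∑ _m ∈ Bj, 1 ≤ ∑ m ∈ Bj, (f m).card := Finset.sum_le_sum hfib
    simp only [Finset.sum_const, smul_eq_mul, mul_one] at h2 ⊢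
    omega
  have hone : ∀ m ∈ Bj, (f m).card = 1 := by
    intro m hm
    exact ((Finset.sum_eq_sum_iff_of_le hfib).mp hsumeq.symm m hm).symm
  have hUeq : Bj.biUnion f = Bk := by
    apply Finset.eq_of_subset_of_card_le hsub
    rw [hcardU, hsumeq]
    simp [hcardeq]
  -- rewrite the goal sets
  have hSk : {x | blockOf l x = jk + 1} = ↑Bk := Set.ext fun x => by
    simpa using hBk x
  have hSj : {x | blockOf l x = jj + 1} = ↑Bj := Set.ext fun x => by
    simpa using hBj x
  rw [hSk, hSj]
  have hmaps : Set.MapsTo α ↑Bk ↑Bj := by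
    intro x hx
    have : x ∈ Bj.biUnion f := hUeq ▸ hx
    rw [Finset.mem_biUnion] at this
    obtain ⟨m, hm, hxm⟩ := this
    have := (Finset.mem_filter.mp hxm).2
    simpa [this] using hm
  refine ⟨hmaps, ?_, ?_⟩
  · intro x hx y hy hxy
    have hmx : α x ∈ Bj := hmaps hx
    have hx' : x ∈ f (α x) := Finset.mem_filter.mpr ⟨hx, rfl⟩
    have hy' : y ∈ f (α x) := Finset.mem_filter.mpr ⟨hy, hxy.symm⟩
    exact Finset.card_le_one.mp (le_of_eq (hone _ hmx)) x hx' y hy'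
  · intro m hm
    obtain ⟨x, hx⟩ := Finset.card_pos.mp (by rw [hone m hm]; omega : 0 < (f m).card)
    rw [hf, Finset.mem_filter] at hx
    exact ⟨x, hx.1, hx.2⟩
end

section
/- Let λ be a p-partition of r with s_i parts equal to p^i, and let φ_λ : ∏_{s_i>0} τ̄_{s_i} → τ̄_r be the map defined blockwise: writing elements of the union of the s_i blocks of size p^i as c + (a−1)p^i + b with 1 ≤ a ≤ s_i, 1 ≤ b ≤ p^i, and c = Σ_{j>i} s_j p^j, set φ_λ(∏α_i)(c + (a−1)p^i + b) = c + (α_i(a)−1)p^i + b if α_i(a) ≠ 0, and 0 if α_i(a) = 0. Then φ_λ is an injective monoid homomorphism. -/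
/-- `tauC p M s i = ∑_{j > i} s j · p^j` is the number of integers lying in
blocks of size larger than `p^i`. -/
def tauC (p M : ℕ) (s : ℕ → ℕ) (i : ℕ) : ℕ :=
  ∑ j ∈ Finset.Ioc i M, s j * p ^ j

/-- The index `i` of the group of blocks of size `p^i` containing `x`. -/
def tauIdx (p M : ℕ) (s : ℕ → ℕ) (x : ℕ) : ℕ :=
  M + 1 - ((Finset.range (M + 1)).filter (fun j => tauC p M s j < x)).card

/-- The map `φ_λ`: given a tuple `α` with `α i ∈ τ̄_{s i}`, write a nonzero
`x ≤ r` as `c + (a-1)p^i + b` with `c = tauC p M s i`, `1 ≤ a ≤ s i`,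
`1 ≤ b ≤ p^i`; then `φ_λ(α)(x) = c + (α i a - 1)p^i + b` if `α i a ≠ 0`,
and `0` otherwise. -/
def phiMap (p M : ℕ) (s : ℕ → ℕ) (α : ℕ → ℕ → ℕ) (x : ℕ) : ℕ :=
  if x = 0 then 0
  else
    let i := tauIdx p M s x
    let a := (x - tauC p M s i - 1) / p ^ i + 1
    let b := (x - tauC p M s i - 1) % p ^ i + 1
    if α i a = 0 then 0 else tauC p M s i + (α i a - 1) * p ^ i + b


/-! The integers `1, …, r` are cut into consecutive blocks: after the `tauC i` integers in larger
blocks come `s i` blocks of size `p ^ i`. A nonzero `x ≤ r` therefore has a unique address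
`(i, a, b)` (block size, block, position in the block), and `φ_λ(α)` keeps `i` and `b` while
replacing `a` by `α i a`, or sends `x` to `0` when `α i a = 0`. So `φ_λ` acts on addresses
coordinatewise through the `α i`, which gives compatibility with composition and the identity;
injectivity follows by reading `α i a` off the image of the first point of the `a`-th block. -/

open Finset

section Blocks

variable {p M : ℕ} {s : ℕ → ℕ} {i a b x : ℕ}

def blockPos (p M : ℕ) (s : ℕ → ℕ) (i a b : ℕ) : ℕ :=
  tauC p M s i + (a - 1) * p ^ i + b

lemma tauC_antitone : Antitone (tauC p M s) := fun _ _ h =>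
  sum_le_sum_of_subset (Ioc_subset_Ioc_left h)

lemma tauC_self : tauC p M s M = 0 := by simp [tauC]

lemma tauC_pred (hi : 1 ≤ i) (hiM : i ≤ M) :
    tauC p M s (i - 1) = s i * p ^ i + tauC p M s i := by
  have hIoc : Ioc (i - 1) M = insert i (Ioc i M) := by
    ext j; simp only [mem_Ioc, mem_insert]; omega
  rw [tauC, hIoc, sum_insert (by simp), tauC]

lemma sum_range_add_tauC (hiM : i ≤ M) :
    ∑ j ∈ range (i + 1), s j * p ^ j + tauC p M s i = ∑ j ∈ range (M + 1), s j * p ^ j := by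
  have hIoc : Ioc i M = Ico (i + 1) (M + 1) := by
    ext j; simp only [mem_Ioc, mem_Ico]; omega
  rw [tauC, hIoc, range_eq_Ico, range_eq_Ico]
  exact sum_Ico_consecutive _ (Nat.zero_le _) (by omega)

lemma tauC_add_le_sum (hiM : i ≤ M) :
    tauC p M s i + s i * p ^ i ≤ ∑ j ∈ range (M + 1), s j * p ^ j := by
  have hi : s i * p ^ i ≤ ∑ j ∈ range (i + 1), s j * p ^ j :=
    single_le_sum (f := fun j => s j * p ^ j) (fun _ _ => Nat.zero_le _) (self_mem_range_succ i)
  have := sum_range_add_tauC (p := p) (s := s) hiM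
  omega

lemma tauIdx_eq_of_mem_block (hiM : i ≤ M) (hlo : tauC p M s i < x)
    (hhi : x ≤ tauC p M s i + s i * p ^ i) : tauIdx p M s x = i := by
  have hfilter : (range (M + 1)).filter (fun j => tauC p M s j < x) = Icc i M := by
    ext j
    simp only [mem_filter, mem_range, mem_Icc]
    constructor
    · rintro ⟨hjM, hj⟩
      refine ⟨?_, by omega⟩
      by_contra! hji
      have := tauC_antitone (p := p) (M := M) (s := s) (show j ≤ i - 1 by omega)
      rw [tauC_pred (by omega) hiM] at this
      omega
    · rintro ⟨hij, hjM⟩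
      exact ⟨by omega, (tauC_antitone hij).trans_lt hlo⟩
  rw [tauIdx, hfilter, Nat.card_Icc]
  omega

lemma exists_mem_block (hx : x ≠ 0) (hxr : x ≤ ∑ j ∈ range (M + 1), s j * p ^ j) :
    ∃ i ≤ M, tauC p M s i < x ∧ x ≤ tauC p M s i + s i * p ^ i := by
  have hex : ∃ j, tauC p M s j < x := ⟨M, by rw [tauC_self]; omega⟩
  refine ⟨Nat.find hex, Nat.find_min' hex (by rw [tauC_self]; omega), Nat.find_spec hex, ?_⟩
  rcases Nat.eq_zero_or_pos (Nat.find hex) with h0 | hpos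
  · have := sum_range_add_tauC (p := p) (s := s) (Nat.zero_le M)
    rw [sum_range_one] at this
    rw [h0]
    omega
  · have hmin := Nat.find_min hex (show Nat.find hex - 1 < Nat.find hex by omega)
    rw [tauC_pred hpos (Nat.find_min' hex (by rw [tauC_self]; omega))] at hmin
    omega

lemma blockPos_mem_block (ha : 1 ≤ a) (has : a ≤ s i) (hb : 1 ≤ b) (hbp : b ≤ p ^ i) :
    tauC p M s i < blockPos p M s i a b ∧
      blockPos p M s i a b ≤ tauC p M s i + s i * p ^ i := by
  have hsucc : (a - 1) * p ^ i + p ^ i = a * p ^ i := by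
    rw [← Nat.succ_mul, Nat.succ_eq_add_one, Nat.sub_add_cancel ha]
  have := Nat.mul_le_mul_right (p ^ i) has
  constructor <;> unfold blockPos <;> omega

lemma blockPos_sub_tauC (hb : 1 ≤ b) :
    blockPos p M s i a b - tauC p M s i - 1 = p ^ i * (a - 1) + (b - 1) := by
  rw [blockPos, Nat.mul_comm]
  omega

lemma exists_blockPos_of_mem_block (hp : 0 < p) (hlo : tauC p M s i < x)
    (hhi : x ≤ tauC p M s i + s i * p ^ i) :
    ∃ a b, 1 ≤ a ∧ a ≤ s i ∧ 1 ≤ b ∧ b ≤ p ^ i ∧ x = blockPos p M s i a b := by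
  have hpi : 0 < p ^ i := pow_pos hp i
  set d := x - tauC p M s i - 1
  have hd : d < s i * p ^ i := by omega
  refine ⟨d / p ^ i + 1, d % p ^ i + 1, Nat.le_add_left _ _, ?_, Nat.le_add_left _ _, ?_, ?_⟩
  · have := (Nat.div_lt_iff_lt_mul hpi).mpr hd
    omega
  · have := Nat.mod_lt d hpi
    omega
  · have := Nat.div_add_mod d (p ^ i)
    rw [blockPos, Nat.add_sub_cancel, Nat.mul_comm]
    omega

lemma eq_zero_or_exists_blockPos (hp : 0 < p) (hxr : x ≤ ∑ j ∈ range (M + 1), s j * p ^ j) :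
    x = 0 ∨ ∃ i a b, i ≤ M ∧ 1 ≤ a ∧ a ≤ s i ∧ 1 ≤ b ∧ b ≤ p ^ i ∧
      x = blockPos p M s i a b := by
  refine or_iff_not_imp_left.mpr fun hx => ?_
  obtain ⟨i, hiM, hlo, hhi⟩ := exists_mem_block hx hxr
  obtain ⟨a, b, ha, has, hb, hbp, rfl⟩ := exists_blockPos_of_mem_block hp hlo hhi
  exact ⟨i, a, b, hiM, ha, has, hb, hbp, rfl⟩

lemma blockPos_le_sum (hiM : i ≤ M) (ha : 1 ≤ a) (has : a ≤ s i) (hb : 1 ≤ b)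
    (hbp : b ≤ p ^ i) : blockPos p M s i a b ≤ ∑ j ∈ range (M + 1), s j * p ^ j :=
  (blockPos_mem_block ha has hb hbp).2.trans (tauC_add_le_sum hiM)

lemma ite_blockPos_injective (hp : 0 < p) (hb : 1 ≤ b) :
    Function.Injective fun c => if c = 0 then 0 else blockPos p M s i c b := by
  have hpi : 0 < p ^ i := pow_pos hp i
  intro c c' h
  simp only [blockPos] at h
  split_ifs at h with hc hc' hc'
  · omega
  · omega
  · omega
  · have := Nat.eq_of_mul_eq_mul_right hpi (show (c - 1) * p ^ i = (c' - 1) * p ^ i by omega)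
    omega

end Blocks

section PhiMap

variable {p M : ℕ} {s : ℕ → ℕ} {i a b x : ℕ} {α β : ℕ → ℕ → ℕ}

lemma phiMap_zero (α : ℕ → ℕ → ℕ) : phiMap p M s α 0 = 0 := if_pos rfl

theorem phiMap_blockPos (hp : 0 < p) (hiM : i ≤ M) (ha : 1 ≤ a) (has : a ≤ s i) (hb : 1 ≤ b)
    (hbp : b ≤ p ^ i) :
    phiMap p M s α (blockPos p M s i a b) =
      if α i a = 0 then 0 else blockPos p M s i (α i a) b := by
  have hpi : 0 < p ^ i := pow_pos hp i
  obtain ⟨hlo, hhi⟩ := blockPos_mem_block (M := M) ha has hb hbp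
  have ha' : (p ^ i * (a - 1) + (b - 1)) / p ^ i + 1 = a := by
    rw [Nat.mul_add_div hpi, Nat.div_eq_of_lt (by omega)]
    omega
  have hb' : (p ^ i * (a - 1) + (b - 1)) % p ^ i + 1 = b := by
    rw [Nat.mul_add_mod, Nat.mod_eq_of_lt (by omega)]
    omega
  rw [phiMap, if_neg (by omega)]
  simp only [tauIdx_eq_of_mem_block hiM hlo hhi, blockPos_sub_tauC hb, ha', hb']
  rfl

lemma phiMap_le_sum (hp : 0 < p) (hα : ∀ i ≤ M, ∀ a ≤ s i, α i a ≤ s i)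
    (hxr : x ≤ ∑ j ∈ range (M + 1), s j * p ^ j) :
    phiMap p M s α x ≤ ∑ j ∈ range (M + 1), s j * p ^ j := by
  obtain rfl | ⟨i, a, b, hiM, ha, has, hb, hbp, rfl⟩ := eq_zero_or_exists_blockPos hp hxr
  · rw [phiMap_zero]
    exact Nat.zero_le _
  rw [phiMap_blockPos hp hiM ha has hb hbp]
  split_ifs with hαa
  · exact Nat.zero_le _
  · exact blockPos_le_sum hiM (Nat.one_le_iff_ne_zero.mpr hαa) (hα i hiM a has) hb hbp

lemma phiMap_comp (hp : 0 < p) (hα : ∀ i ≤ M, α i 0 = 0)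
    (hβ : ∀ i ≤ M, ∀ a ≤ s i, β i a ≤ s i)
    (hxr : x ≤ ∑ j ∈ range (M + 1), s j * p ^ j) :
    phiMap p M s (fun i a => α i (β i a)) x = phiMap p M s α (phiMap p M s β x) := by
  obtain rfl | ⟨i, a, b, hiM, ha, has, hb, hbp, rfl⟩ := eq_zero_or_exists_blockPos hp hxr
  · simp only [phiMap_zero]
  rw [phiMap_blockPos hp hiM ha has hb hbp, phiMap_blockPos hp hiM ha has hb hbp]
  by_cases hβa : β i a = 0
  · rw [if_pos hβa, hβa, hα i hiM, phiMap_zero, if_pos rfl]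
  · rw [if_neg hβa,
      phiMap_blockPos hp hiM (Nat.one_le_iff_ne_zero.mpr hβa) (hβ i hiM a has) hb hbp]

lemma phiMap_id (hp : 0 < p) (hxr : x ≤ ∑ j ∈ range (M + 1), s j * p ^ j) :
    phiMap p M s (fun _ a => a) x = x := by
  obtain rfl | ⟨i, a, b, hiM, ha, has, hb, hbp, rfl⟩ := eq_zero_or_exists_blockPos hp hxr
  · exact phiMap_zero _
  rw [phiMap_blockPos hp hiM ha has hb hbp, if_neg (by omega)]

lemma eq_of_phiMap_eq (hp : 0 < p) (hα : ∀ i ≤ M, α i 0 = 0) (hβ : ∀ i ≤ M, β i 0 = 0)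
    (h : ∀ x ≤ ∑ j ∈ range (M + 1), s j * p ^ j, phiMap p M s α x = phiMap p M s β x)
    (hiM : i ≤ M) (has : a ≤ s i) : α i a = β i a := by
  rcases Nat.eq_zero_or_pos a with rfl | ha
  · rw [hα i hiM, hβ i hiM]
  have hpi : 1 ≤ p ^ i := pow_pos hp i
  have hx := h _ (blockPos_le_sum hiM ha has le_rfl hpi)
  rw [phiMap_blockPos hp hiM ha has le_rfl hpi, phiMap_blockPos hp hiM ha has le_rfl hpi] at hx
  exact ite_blockPos_injective hp le_rfl hx

end PhiMap

/-- `φ_λ` is an injective monoid homomorphism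
`∏_{s_i > 0} τ̄_{s_i} → τ̄_r`: it lands in `τ̄_r`, sends the identity tuple to
the identity, sends (componentwise) composition to composition, and is
injective on tuples of maps in `τ̄_{s_i}`. -/
theorem stmt_14 (p M : ℕ) (hp : p.Prime) (s : ℕ → ℕ)
    (r : ℕ) (hr : r = ∑ j ∈ Finset.range (M + 1), s j * p ^ j)
    (α β : ℕ → ℕ → ℕ)
    (hα : ∀ i, i ≤ M → α i 0 = 0 ∧ ∀ a, a ≤ s i → α i a ≤ s i)
    (hβ : ∀ i, i ≤ M → β i 0 = 0 ∧ ∀ a, a ≤ s i → β i a ≤ s i) :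
    (phiMap p M s α 0 = 0 ∧ ∀ x, x ≤ r → phiMap p M s α x ≤ r) ∧
    (∀ x, x ≤ r →
      phiMap p M s (fun i a => α i (β i a)) x = phiMap p M s α (phiMap p M s β x)) ∧
    (∀ x, x ≤ r → phiMap p M s (fun _ a => a) x = x) ∧
    ((∀ x, x ≤ r → phiMap p M s α x = phiMap p M s β x) →
      ∀ i, i ≤ M → ∀ a, a ≤ s i → α i a = β i a) := by
  subst hr
  have hp0 := hp.pos
  exact ⟨⟨phiMap_zero α, fun x => phiMap_le_sum hp0 fun i hi => (hα i hi).2⟩,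
    fun x => phiMap_comp hp0 (fun i hi => (hα i hi).1) (fun i hi => (hβ i hi).2),
    fun x => phiMap_id hp0,
    fun h i hi a ha =>
      eq_of_phiMap_eq hp0 (fun i hi => (hα i hi).1) (fun i hi => (hβ i hi).1) h hi ha⟩
end

section
/- Let G_λ be a Young subgroup of S_r with direct product decomposition G_λ = ∏_i G_{λ_i} over the λ-blocks, let ν be a composition, and let α be a 0-preserving map of {0,...,r}. Define G_R(λ,α,ν) = {σ ∈ G_λ : ∃π ∈ G_ν, σα = απ} and G_{R,i}(λ,α,ν) = G_R(λ,α,ν) ∩ G_{λ_i}. Then G_R(λ,α,ν) = ∏_i G_{R,i}(λ,α,ν). -/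
/-!
If `σ ∈ G_λ` and `σ α = α π` with `π ∈ G_ν`, then `π` preserves the labelling `x ↦ blockOf λ (α x)`
because `σ` preserves `blockOf λ`. So `σ` splits into its restrictions `σ_i` to the `λ`-blocks,
and the restriction `π_i` of `π` to the points labelled `i` satisfies `σ_i α = α π_i`.
Conversely `G_R(λ,α,ν)` is closed under products, since `G_ν` maps `{0, …, r}` into itself.
-/

open Equiv Equiv.Perm

namespace Equiv.Perm

variable {α β γ : Type*} [DecidableEq β]

def fiberPart (σ : Perm α) (b : α → β) (hb : ∀ x, b (σ x) = b x) (i : β) : Perm α :=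
  ofSubtype (σ.subtypePerm (p := fun x => b x = i) fun x => by rw [hb])

variable {σ : Perm α} {b : α → β} {hb : ∀ x, b (σ x) = b x}

theorem fiberPart_apply (i : β) (x : α) :
    fiberPart σ b hb i x = if b x = i then σ x else x := by
  split_ifs with h
  · exact ofSubtype_subtypePerm_of_mem _ h
  · exact ofSubtype_subtypePerm_of_not_mem _ h

theorem fiberPart_apply_of_ne {i : β} {x : α} (h : b x ≠ i) : fiberPart σ b hb i x = x := by
  rw [fiberPart_apply, if_neg h]

theorem prod_map_fiberPart_apply {L : List β} (hL : L.Nodup) (x : α) :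
    (L.map (fiberPart σ b hb)).prod x = if b x ∈ L then σ x else x := by
  induction L with
  | nil => simp
  | cons i L ih =>
    obtain ⟨hi, hL⟩ := List.nodup_cons.mp hL
    rw [List.map_cons, List.prod_cons, mul_apply, ih hL, fiberPart_apply]
    by_cases hx : b x ∈ L
    · have : b x ≠ i := fun h => hi (h ▸ hx)
      simp [hx, hb, this]
    · simp [hx, eq_comm]

theorem fiberPart_apply_comp {π : Perm γ} {f : γ → α} (hπ : ∀ y, b (f (π y)) = b (f y))
    (i : β) {y : γ} (h : σ (f y) = f (π y)) :
    fiberPart σ b hb i (f y) = f (fiberPart π (b ∘ f) hπ i y) := by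
  simp only [fiberPart_apply, Function.comp_apply]
  split_ifs <;> simp_all

end Equiv.Perm

theorem blockOf_eq_zero_iff {l : List ℕ} {k : ℕ} : blockOf l k = 0 ↔ k = 0 := by
  unfold blockOf
  split <;> simp_all

theorem blockOf_le_length {l : List ℕ} {k : ℕ} (hk : k ≤ l.sum) : blockOf l k ≤ l.length := by
  unfold blockOf
  split_ifs with h0
  · exact Nat.zero_le _
  obtain ⟨n, hn⟩ : ∃ n, l.length = n + 1 :=
    Nat.exists_eq_succ_of_ne_zero fun h => h0 (by simp_all [List.length_eq_zero_iff])
  rw [hn]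
  suffices ((Finset.range (n + 1)).filter fun i => (l.take (i + 1)).sum < k) ⊂
      Finset.range (n + 1) by
    simpa using Finset.card_lt_card this
  refine Finset.filter_ssubset.mpr ⟨n, by simp, ?_⟩
  rw [← hn, List.take_length]
  omega

section youngSet

variable {l : List ℕ} {σ τ : Perm ℕ}

theorem one_mem_youngSet : (1 : Perm ℕ) ∈ youngSet l :=
  ⟨fun _ => rfl, fun _ _ => rfl⟩

theorem mul_mem_youngSet (hσ : σ ∈ youngSet l) (hτ : τ ∈ youngSet l) : σ * τ ∈ youngSet l :=
  ⟨fun k => by rw [mul_apply, hσ.1, hτ.1], fun k hk => by rw [mul_apply, hτ.2 k hk, hσ.2 k hk]⟩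

theorem apply_le_sum_of_mem_youngSet (hσ : σ ∈ youngSet l) {x : ℕ} (hx : x ≤ l.sum) :
    σ x ≤ l.sum := by
  by_contra h
  have := σ.injective (hσ.2 (σ x) (by omega))
  omega

theorem apply_zero_of_mem_youngSet (hσ : σ ∈ youngSet l) : σ 0 = 0 := by
  have h := hσ.1 0
  rwa [blockOf_eq_zero_iff.mpr rfl, blockOf_eq_zero_iff] at h

theorem apply_eq_self_of_mem_youngSet (hσ : σ ∈ youngSet l) {x : ℕ}
    (hx : ∀ i < l.length, blockOf l x ≠ i + 1) : σ x = x := by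
  rcases Nat.eq_zero_or_pos x with rfl | hx0
  · exact apply_zero_of_mem_youngSet hσ
  have hblock : blockOf l x ≠ 0 := blockOf_eq_zero_iff.not.mpr hx0.ne'
  refine hσ.2 x (not_le.mp fun hle => hx (blockOf l x - 1) ?_ (by omega))
  have := blockOf_le_length hle
  omega

theorem fiberPart_mem_youngSet {β : Type*} [DecidableEq β] (hσ : σ ∈ youngSet l) (b : ℕ → β)
    (hb : ∀ x, b (σ x) = b x) (i : β) : fiberPart σ b hb i ∈ youngSet l := by
  refine ⟨fun k => ?_, fun k hk => ?_⟩ <;> rw [fiberPart_apply] <;> split_ifs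
  exacts [hσ.1 k, rfl, hσ.2 k hk, rfl]

end youngSet

/-- `G_R(λ,α,ν)`, with `r = ν.sum`. -/
def intertwiningSubmonoid (llam lnu : List ℕ) (α : ℕ → ℕ) : Submonoid (Perm ℕ) where
  carrier := {σ | σ ∈ youngSet llam ∧ ∃ π ∈ youngSet lnu, ∀ x, x ≤ lnu.sum → σ (α x) = α (π x)}
  one_mem' := ⟨one_mem_youngSet, 1, one_mem_youngSet, fun _ _ => rfl⟩
  mul_mem' := by
    rintro σ τ ⟨hσ, π, hπ, hσπ⟩ ⟨hτ, ρ, hρ, hτρ⟩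
    refine ⟨mul_mem_youngSet hσ hτ, π * ρ, mul_mem_youngSet hπ hρ, fun x hx => ?_⟩
    rw [mul_apply, mul_apply, hτρ x hx, hσπ _ (apply_le_sum_of_mem_youngSet hρ hx)]

section intertwiningSubmonoid

variable {llam lnu : List ℕ} {α : ℕ → ℕ} {σ : Perm ℕ}

theorem blockOf_comp_apply_eq_of_intertwines {π : Perm ℕ} (hσ : σ ∈ youngSet llam)
    (hπ : π ∈ youngSet lnu)
    (hσπ : ∀ x, x ≤ lnu.sum → σ (α x) = α (π x)) (x : ℕ) :
    blockOf llam (α (π x)) = blockOf llam (α x) := by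
  by_cases hx : x ≤ lnu.sum
  · rw [← hσπ x hx, hσ.1]
  · rw [hπ.2 x (not_le.mp hx)]

theorem fiberPart_mem_intertwiningSubmonoid (hσ : σ ∈ intertwiningSubmonoid llam lnu α)
    (i : ℕ) : fiberPart σ (blockOf llam) hσ.1.1 i ∈ intertwiningSubmonoid llam lnu α := by
  obtain ⟨hσ, π, hπ, hσπ⟩ := hσ
  have hπα := blockOf_comp_apply_eq_of_intertwines hσ hπ hσπ
  exact ⟨fiberPart_mem_youngSet hσ _ _ i, fiberPart π _ hπα i, fiberPart_mem_youngSet hπ _ _ i,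
    fun x hx => fiberPart_apply_comp hπα i (hσπ x hx)⟩

theorem prod_fiberPart_blockOf (hσ : σ ∈ youngSet llam) :
    ((List.range llam.length).map fun i => fiberPart σ (blockOf llam) hσ.1 (i + 1)).prod = σ := by
  ext x
  rw [show (fun i => fiberPart σ (blockOf llam) hσ.1 (i + 1)) =
      fiberPart σ (blockOf llam) hσ.1 ∘ (· + 1) from rfl, ← List.map_map,
    prod_map_fiberPart_apply (List.nodup_range.map (add_left_injective 1))]
  split_ifs with h
  · rfl
  · refine (apply_eq_self_of_mem_youngSet hσ fun i hi hx => h ?_).symm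
    exact List.mem_map.mpr ⟨i, List.mem_range.mpr hi, hx.symm⟩

end intertwiningSubmonoid

theorem stmt_17_general (r : ℕ) (llam lnu : List ℕ) (hnu : lnu.sum = r)
    (α : ℕ → ℕ) :
    ∀ σ : Equiv.Perm ℕ,
      (σ ∈ youngSet llam ∧ ∃ π ∈ youngSet lnu, ∀ x, x ≤ r → σ (α x) = α (π x)) ↔
      (∃ g : ℕ → Equiv.Perm ℕ,
        (∀ i, i < llam.length →
          g i ∈ youngSet llam ∧
          (∃ π ∈ youngSet lnu, ∀ x, x ≤ r → (g i) (α x) = α (π x)) ∧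
          ∀ x, blockOf llam x ≠ i + 1 → (g i) x = x) ∧
        σ = ((List.range llam.length).map g).prod) := by
  subst hnu
  intro σ
  change σ ∈ intertwiningSubmonoid llam lnu α ↔ _
  constructor
  · intro hσ
    refine ⟨fun i => fiberPart σ (blockOf llam) hσ.1.1 (i + 1), fun i _ => ?_,
      (prod_fiberPart_blockOf hσ.1).symm⟩
    obtain ⟨hyoung, hintertwines⟩ := fiberPart_mem_intertwiningSubmonoid hσ (i + 1)
    exact ⟨hyoung, hintertwines, fun x => fiberPart_apply_of_ne⟩
  · rintro ⟨g, hg, rfl⟩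
    refine Submonoid.list_prod_mem _ fun τ hτ => ?_
    obtain ⟨i, hi, rfl⟩ := List.mem_map.mp hτ
    exact ⟨(hg i (List.mem_range.mp hi)).1, (hg i (List.mem_range.mp hi)).2.1⟩

/-- `G_R(λ,α,ν) = {σ ∈ G_λ : ∃ π ∈ G_ν, σα = απ}` is the internal direct
product of the subgroups `G_{R,i}(λ,α,ν) = G_R(λ,α,ν) ∩ G_{λ_i}`: a permutation
`σ` lies in `G_R(λ,α,ν)` iff it is the product of elements of `G_R(λ,α,ν)`
each supported on a single `λ`-block. -/
theorem stmt_17 (r : ℕ) (llam lnu : List ℕ) (hlam : llam.sum = r) (hnu : lnu.sum = r)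
    (α : ℕ → ℕ) (hα0 : α 0 = 0) (hαr : ∀ x, x ≤ r → α x ≤ r) :
    ∀ σ : Equiv.Perm ℕ,
      (σ ∈ youngSet llam ∧ ∃ π ∈ youngSet lnu, ∀ x, x ≤ r → σ (α x) = α (π x)) ↔
      (∃ g : ℕ → Equiv.Perm ℕ,
        (∀ i, i < llam.length →
          g i ∈ youngSet llam ∧
          (∃ π ∈ youngSet lnu, ∀ x, x ≤ r → (g i) (α x) = α (π x)) ∧
          ∀ x, blockOf llam x ≠ i + 1 → (g i) x = x) ∧
        σ = ((List.range llam.length).map g).prod) :=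
  stmt_17_general r llam lnu hnu α
end

section
/- Let λ be a composition, ν a composition, and α : {0,...,r} → {0,...,r} with α(0)=0. Suppose there exist a λ-block b_k of size λ_k = p^t > p^s and an index i in a ν-block b_j of size ν_j = p^s with α(i) ∈ b_k. Set A₁ = b_k ∩ α(b_j), a₁ = #A₁, so 1 ≤ a₁ ≤ p^s < p^t. Then every σ ∈ G_{R,k}(λ,α,ν) = {σ ∈ S(b_k) : ∃π ∈ G_ν, σα = απ} preserves A₁ and b_k∖A₁; hence G_{R,k}(λ,α,ν) is contained in S(A₁) × S(b_k∖A₁), and the index [S(b_k) : G_{R,k}(λ,α,ν)] is divisible by p. -/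
open Equiv Finset
open scoped Nat

lemma card_filter_range_eq_iff_of_antitone {P : ℕ → Prop} [DecidablePred P] (hP : Antitone P)
    {m n : ℕ} (hm : m < n) : #{i ∈ range n | P i} = m ↔ ¬ P m ∧ ∀ i < m, P i := by
  constructor
  · intro h
    refine ⟨fun hPm => ?_, fun i hi => by_contra fun hPi => ?_⟩
    · have hsub : range (m + 1) ⊆ {i ∈ range n | P i} := fun j hj => by
        simp only [mem_range, mem_filter] at hj ⊢
        exact ⟨by omega, hP (by omega) hPm⟩
      have := card_le_card hsub
      rw [card_range, h] at this
      omega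
    · have hsub : {i ∈ range n | P i} ⊆ range i := fun j hj => by
        simp only [mem_range, mem_filter] at hj ⊢
        exact lt_of_not_ge fun hij => hPi (hP hij hj.2)
      have := card_le_card hsub
      rw [card_range, h] at this
      omega
  · rintro ⟨hPm, hlt⟩
    have : {i ∈ range n | P i} = range m := by
      ext j
      simp only [mem_range, mem_filter]
      exact ⟨fun hj => lt_of_not_ge fun hjm => hPm (hP hjm hj.2), fun hj => ⟨by omega, hlt j hj⟩⟩
    rw [this, card_range]

/-- The block `b_{m+1}` of the composition `l`: `m` is `0`-based, unlike `blockOf`. -/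
def block (l : List ℕ) (m : ℕ) : Set ℕ := {k | blockOf l k = m + 1}

section Blocks

variable {l : List ℕ} {m : ℕ}

lemma mem_block_iff (hm : m < l.length) {k : ℕ} :
    k ∈ block l m ↔ k ∈ Set.Ioc (l.take m).sum (l.take (m + 1)).sum := by
  rcases eq_or_ne k 0 with rfl | hk
  · simp [block, blockOf]
  have hmono := l.monotone_sum_take
  have hprefix : (∀ i < m, (l.take (i + 1)).sum < k) ↔ (l.take m).sum < k := by
    cases m with
    | zero => simpa using Nat.pos_of_ne_zero hk
    | succ m => exact ⟨fun h => h m m.lt_succ_self, fun h i hi => (hmono (by omega)).trans_lt h⟩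
  rw [block, Set.mem_ofPred_eq, blockOf, if_neg hk, Nat.add_right_cancel_iff,
    card_filter_range_eq_iff_of_antitone (fun i j hij h => (hmono (by omega)).trans_lt h) hm,
    hprefix, Set.mem_Ioc, not_lt, and_comm]

lemma block_finite (hm : m < l.length) : (block l m).Finite :=
  (Set.finite_Ioc _ _).subset fun _ => (mem_block_iff hm).1

lemma ncard_block (hm : m < l.length) : (block l m).ncard = l[m] := by
  rw [Set.ext fun _ => mem_block_iff hm, Set.ncard_Ioc_nat, List.sum_take_succ _ _ hm]
  omega

lemma le_sum_of_mem_block (hm : m < l.length) {k : ℕ} (hk : k ∈ block l m) : k ≤ l.sum :=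
  calc k ≤ (l.take (m + 1)).sum := ((mem_block_iff hm).1 hk).2
    _ ≤ (l.take l.length).sum := l.monotone_sum_take hm
    _ = l.sum := by rw [List.take_length]

end Blocks

lemma Equiv.Perm.apply_mem_iff_of_fixes_compl {β : Type*} {σ : Perm β} {S : Set β}
    (hσ : ∀ x ∉ S, σ x = x) (x : β) : σ x ∈ S ↔ x ∈ S :=
  (MulAction.set_mem_fixedBy_iff S σ).1
    (MulAction.set_mem_fixedBy_of_movedBy_subset fun y hy => not_not.1 fun h => hy (hσ y h)) x

def youngSubgroup (l : List ℕ) : Subgroup (Perm ℕ) where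
  carrier := youngSet l
  one_mem' := ⟨fun _ => rfl, fun _ _ => rfl⟩
  mul_mem' {π₁ π₂} h₁ h₂ :=
    ⟨fun k => (h₁.1 _).trans (h₂.1 k), fun k hk => by rw [Perm.mul_apply, h₂.2 k hk, h₁.2 k hk]⟩
  inv_mem' {π} h :=
    ⟨fun k => by simpa using (h.1 (π⁻¹ k)).symm, fun k hk => by rw [Perm.inv_eq_iff_eq, h.2 k hk]⟩

lemma youngSubgroup_mapsTo_Iic {l : List ℕ} {π : Perm ℕ} (hπ : π ∈ youngSubgroup l) :
    Set.MapsTo π (Set.Iic l.sum) (Set.Iic l.sum) := fun x hx =>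
  (Perm.apply_mem_iff_of_fixes_compl (fun y hy => hπ.2 y (not_le.1 hy)) x).2 hx

section Intertwining

variable {β γ : Type*}

def intertwiningSubgroup (H : Subgroup (Perm γ)) (D : Set γ) (hD : ∀ π ∈ H, Set.MapsTo π D D)
    (α : γ → β) : Subgroup (Perm β) where
  carrier := {σ | ∃ π ∈ H, ∀ x ∈ D, σ (α x) = α (π x)}
  one_mem' := ⟨1, H.one_mem, fun _ _ => rfl⟩
  mul_mem' := by
    rintro σ₁ σ₂ ⟨π₁, hπ₁, h₁⟩ ⟨π₂, hπ₂, h₂⟩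
    refine ⟨π₁ * π₂, H.mul_mem hπ₁ hπ₂, fun x hx => ?_⟩
    rw [Perm.mul_apply, h₂ x hx, h₁ _ (hD π₂ hπ₂ hx), Perm.mul_apply]
  inv_mem' := by
    rintro σ ⟨π, hπ, h⟩
    refine ⟨π⁻¹, H.inv_mem hπ, fun x hx => ?_⟩
    rw [Perm.inv_eq_iff_eq, h _ (hD _ (H.inv_mem hπ) hx)]
    simp

lemma apply_mem_image_iff_of_intertwine {σ : Perm β} {π : Perm γ} {α : γ → β} {J : Set γ}
    (hπ : ∀ x, π x ∈ J ↔ x ∈ J) (hσ : ∀ x ∈ J, σ (α x) = α (π x)) (y : β) :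
    σ y ∈ α '' J ↔ y ∈ α '' J := by
  constructor
  · rintro ⟨x, hx, hxy⟩
    have hx' : π⁻¹ x ∈ J := (hπ _).1 (by simpa using hx)
    exact ⟨π⁻¹ x, hx', σ.injective (by rw [hσ _ hx']; simpa using hxy)⟩
  · rintro ⟨x, hx, rfl⟩
    exact ⟨π x, (hπ x).2 hx, (hσ x hx).symm⟩

lemma Subgroup.card_dvd_factorial_mul_factorial {G : Subgroup (Perm β)} {A C : Set β}
    (hA : A.Finite) (hC : C.Finite) (hGA : ∀ σ ∈ G, ∀ x, σ x ∈ A ↔ x ∈ A)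
    (hGC : ∀ σ ∈ G, ∀ x, σ x ∈ C ↔ x ∈ C) (hfix : ∀ σ ∈ G, ∀ x ∉ A ∪ C, σ x = x) :
    Nat.card G ∣ A.ncard ! * C.ncard ! := by
  let restrict : G →* Perm A × Perm C :=
    { toFun := fun σ => (σ.1.subtypePerm (hGA σ σ.2), σ.1.subtypePerm (hGC σ σ.2))
      map_one' := rfl
      map_mul' := fun _ _ => rfl }
  have hinj : Function.Injective restrict := by
    intro σ τ h
    ext x
    by_cases hxA : x ∈ A
    · exact congrArg Subtype.val (Perm.ext_iff.1 (congrArg Prod.fst h) ⟨x, hxA⟩)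
    by_cases hxC : x ∈ C
    · exact congrArg Subtype.val (Perm.ext_iff.1 (congrArg Prod.snd h) ⟨x, hxC⟩)
    have hx : x ∉ A ∪ C := by simp [hxA, hxC]
    rw [hfix σ σ.2 x hx, hfix τ τ.2 x hx]
  have := hA.to_subtype
  have := hC.to_subtype
  simpa [Nat.card_prod, Nat.card_perm, Nat.card_coe_set_eq] using
    Subgroup.card_dvd_of_injective restrict hinj

end Intertwining

lemma Nat.choose_dvd_factorial_div {n a g : ℕ} (ha : a ≤ n) (hg : g ∣ a ! * (n - a)!) :
    n.choose a ∣ n ! / g := by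
  obtain ⟨c, hc⟩ := hg
  have hg0 : 0 < g := Nat.pos_of_ne_zero fun h => by
    simp [h, Nat.factorial_ne_zero] at hc
  refine ⟨c, ?_⟩
  rw [← Nat.choose_mul_factorial_mul_factorial ha, mul_assoc, hc, mul_left_comm,
    Nat.mul_div_cancel_left _ hg0]

section BlockIntertwiner

variable {llam lnu : List ℕ} {kb jb : ℕ} {α : ℕ → ℕ} {σ : Perm ℕ}

/-- `G_{R,k}(λ,α,ν)`, with `S(b_k)` realised as the permutations fixing every point outside
`b_k`. -/
def blockIntertwiner (llam lnu : List ℕ) (kb : ℕ) (α : ℕ → ℕ) : Subgroup (Perm ℕ) :=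
  fixingSubgroup (Perm ℕ) (block llam kb)ᶜ ⊓
    intertwiningSubgroup (youngSubgroup lnu) (Set.Iic lnu.sum)
      (fun _ => youngSubgroup_mapsTo_Iic) α

lemma apply_eq_of_mem_blockIntertwiner (hσ : σ ∈ blockIntertwiner llam lnu kb α) {x : ℕ}
    (hx : x ∉ block llam kb) : σ x = x :=
  (mem_fixingSubgroup_iff (Perm ℕ)).1 hσ.1 x hx

lemma apply_mem_block_iff_of_mem_blockIntertwiner (hσ : σ ∈ blockIntertwiner llam lnu kb α)
    (y : ℕ) : σ y ∈ block llam kb ↔ y ∈ block llam kb :=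
  Perm.apply_mem_iff_of_fixes_compl (fun _ => apply_eq_of_mem_blockIntertwiner hσ) y

lemma apply_mem_image_block_iff_of_mem_blockIntertwiner (hjb : jb < lnu.length)
    (hσ : σ ∈ blockIntertwiner llam lnu kb α) (y : ℕ) :
    σ y ∈ α '' block lnu jb ↔ y ∈ α '' block lnu jb := by
  obtain ⟨π, hπ, hσπ⟩ := hσ.2
  exact apply_mem_image_iff_of_intertwine (fun x => iff_of_eq (congrArg (· = jb + 1) (hπ.1 x)))
    (fun x hx => hσπ x (le_sum_of_mem_block hjb hx)) y

lemma coe_blockIntertwiner (llam lnu : List ℕ) (kb : ℕ) (α : ℕ → ℕ) :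
    (blockIntertwiner llam lnu kb α : Set (Perm ℕ)) =
      {σ : Perm ℕ | (∀ x, blockOf llam x ≠ kb + 1 → σ x = x) ∧
        (∀ x, blockOf llam (σ x) = blockOf llam x) ∧
        ∃ π ∈ youngSet lnu, ∀ x, x ≤ lnu.sum → σ (α x) = α (π x)} := by
  ext σ
  constructor
  · intro hσ
    refine ⟨fun _ => apply_eq_of_mem_blockIntertwiner hσ, fun x => ?_, hσ.2⟩
    by_cases hx : x ∈ block llam kb
    · exact ((apply_mem_block_iff_of_mem_blockIntertwiner hσ x).2 hx).trans hx.symm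
    · rw [apply_eq_of_mem_blockIntertwiner hσ hx]
  · rintro ⟨hfix, -, hint⟩
    exact ⟨(mem_fixingSubgroup_iff (Perm ℕ)).2 hfix, hint⟩

lemma card_blockIntertwiner_dvd (hkb : kb < llam.length) (hjb : jb < lnu.length) :
    Nat.card (blockIntertwiner llam lnu kb α) ∣ (block llam kb ∩ α '' block lnu jb).ncard ! *
      (llam[kb] - (block llam kb ∩ α '' block lnu jb).ncard)! := by
  have hfin := block_finite hkb
  rw [← ncard_block hkb, ← Set.ncard_inter_add_ncard_sdiff_eq_ncard _ (α '' block lnu jb) hfin,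
    Nat.add_sub_cancel_left]
  refine Subgroup.card_dvd_factorial_mul_factorial (hfin.inter_of_left _) hfin.sdiff
    (fun σ hσ y => ?_) (fun σ hσ y => ?_) (fun σ hσ y hy => ?_)
  · simp only [Set.mem_inter_iff, apply_mem_block_iff_of_mem_blockIntertwiner hσ,
      apply_mem_image_block_iff_of_mem_blockIntertwiner hjb hσ]
  · simp only [Set.mem_sdiff, apply_mem_block_iff_of_mem_blockIntertwiner hσ,
      apply_mem_image_block_iff_of_mem_blockIntertwiner hjb hσ]
  · rw [Set.inter_union_sdiff] at hy
    exact apply_eq_of_mem_blockIntertwiner hσ hy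

end BlockIntertwiner

theorem stmt_18_general (p : ℕ) (hp : p.Prime) (r s t : ℕ) (hst : s < t)
    (llam lnu : List ℕ) (hnusum : lnu.sum = r)
    (kb jb : ℕ) (hkb : kb < llam.length) (hjb : jb < lnu.length)
    (hlamk : llam.get ⟨kb, hkb⟩ = p ^ t) (hnuj : lnu.get ⟨jb, hjb⟩ = p ^ s)
    (α : ℕ → ℕ)
    (i : ℕ) (hi : blockOf lnu i = jb + 1) (hαi : blockOf llam (α i) = kb + 1) :
    (∀ σ : Equiv.Perm ℕ,
      ((∀ x, blockOf llam x ≠ kb + 1 → σ x = x) ∧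
        (∀ x, blockOf llam (σ x) = blockOf llam x) ∧
        ∃ π ∈ youngSet lnu, ∀ x, x ≤ r → σ (α x) = α (π x)) →
      (∀ y, (blockOf llam y = kb + 1 ∧ ∃ x, blockOf lnu x = jb + 1 ∧ α x = y) →
        (blockOf llam (σ y) = kb + 1 ∧ ∃ x, blockOf lnu x = jb + 1 ∧ α x = σ y)) ∧
      (∀ y, blockOf llam y = kb + 1 → ¬ (∃ x, blockOf lnu x = jb + 1 ∧ α x = y) →
        blockOf llam (σ y) = kb + 1 ∧ ¬ ∃ x, blockOf lnu x = jb + 1 ∧ α x = σ y)) ∧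
    p ∣ (Nat.factorial (p ^ t) /
      Set.ncard {σ : Equiv.Perm ℕ |
        (∀ x, blockOf llam x ≠ kb + 1 → σ x = x) ∧
        (∀ x, blockOf llam (σ x) = blockOf llam x) ∧
        ∃ π ∈ youngSet lnu, ∀ x, x ≤ r → σ (α x) = α (π x)}) := by
  subst hnusum
  rw [← coe_blockIntertwiner, ← Nat.card_coe_set_eq]
  refine ⟨fun σ hσ => ?_, ?_⟩
  · have hσ' : σ ∈ blockIntertwiner llam lnu kb α := by
      rw [← SetLike.mem_coe, coe_blockIntertwiner]
      exact hσ
    have hB := apply_mem_block_iff_of_mem_blockIntertwiner hσ'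
    have hJ := apply_mem_image_block_iff_of_mem_blockIntertwiner hjb hσ'
    exact ⟨fun y hy => ⟨(hB y).2 hy.1, (hJ y).2 hy.2⟩,
      fun y hy hny => ⟨(hB y).2 hy, mt (hJ y).1 hny⟩⟩
  set a := (block llam kb ∩ α '' block lnu jb).ncard
  have ha_pos : 0 < a :=
    (Set.ncard_pos ((block_finite hkb).inter_of_left _)).2 ⟨α i, hαi, i, hi, rfl⟩
  have ha_lt : a < p ^ t :=
    calc a ≤ (α '' block lnu jb).ncard :=
          Set.ncard_le_ncard Set.inter_subset_right ((block_finite hjb).image α)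
      _ ≤ (block lnu jb).ncard := Set.ncard_image_le (block_finite hjb)
      _ = p ^ s := by rw [ncard_block hjb, ← hnuj]; rfl
      _ < p ^ t := Nat.pow_lt_pow_right hp.one_lt hst
  have hdvd : Nat.card (blockIntertwiner llam lnu kb α) ∣ a ! * (p ^ t - a)! := by
    simpa [← hlamk] using card_blockIntertwiner_dvd (α := α) hkb hjb
  exact (hp.dvd_choose_pow ha_pos.ne' ha_lt.ne).trans (Nat.choose_dvd_factorial_div ha_lt.le hdvd)

/-- Let `b_k` be a `λ`-block of size `p^t` and `b_j` a `ν`-block of size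
`p^s < p^t` with `α(i) ∈ b_k` for some `i ∈ b_j`, and set
`A₁ = b_k ∩ α(b_j)`.  Every `σ` in
`G_{R,k}(λ,α,ν) = {σ ∈ S(b_k) : ∃ π ∈ G_ν, σα = απ}` preserves `A₁` and
`b_k ∖ A₁`; hence `G_{R,k}(λ,α,ν) ⊆ S(A₁) × S(b_k∖A₁)` and the index
`[S(b_k) : G_{R,k}(λ,α,ν)]` is divisible by `p`. -/
theorem stmt_18 (p : ℕ) (hp : p.Prime) (r s t : ℕ) (hst : s < t)
    (llam lnu : List ℕ) (hlamsum : llam.sum = r) (hnusum : lnu.sum = r)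
    (kb jb : ℕ) (hkb : kb < llam.length) (hjb : jb < lnu.length)
    (hlamk : llam.get ⟨kb, hkb⟩ = p ^ t) (hnuj : lnu.get ⟨jb, hjb⟩ = p ^ s)
    (α : ℕ → ℕ) (hα0 : α 0 = 0) (hαr : ∀ x, x ≤ r → α x ≤ r)
    (i : ℕ) (hi : blockOf lnu i = jb + 1) (hαi : blockOf llam (α i) = kb + 1) :
    (∀ σ : Equiv.Perm ℕ,
      ((∀ x, blockOf llam x ≠ kb + 1 → σ x = x) ∧
        (∀ x, blockOf llam (σ x) = blockOf llam x) ∧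
        ∃ π ∈ youngSet lnu, ∀ x, x ≤ r → σ (α x) = α (π x)) →
      (∀ y, (blockOf llam y = kb + 1 ∧ ∃ x, blockOf lnu x = jb + 1 ∧ α x = y) →
        (blockOf llam (σ y) = kb + 1 ∧ ∃ x, blockOf lnu x = jb + 1 ∧ α x = σ y)) ∧
      (∀ y, blockOf llam y = kb + 1 → ¬ (∃ x, blockOf lnu x = jb + 1 ∧ α x = y) →
        blockOf llam (σ y) = kb + 1 ∧ ¬ ∃ x, blockOf lnu x = jb + 1 ∧ α x = σ y)) ∧
    p ∣ (Nat.factorial (p ^ t) /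
      Set.ncard {σ : Equiv.Perm ℕ |
        (∀ x, blockOf llam x ≠ kb + 1 → σ x = x) ∧
        (∀ x, blockOf llam (σ x) = blockOf llam x) ∧
        ∃ π ∈ youngSet lnu, ∀ x, x ≤ r → σ (α x) = α (π x)}) :=
  stmt_18_general p hp r s t hst llam lnu hnusum kb jb hkb hjb hlamk hnuj α i hi hαi
end
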